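/- arXiv:2602.23939 — 6 statements merged into one kernel-verified Lean document; each statement's English description precedes it below -/
import Mathlib

section
/- Let Y → X → Z₁ ⊕ Z₂ → Y[1] be a distinguished triangle in 𝒟 whose third map has components h₁ : Z₁ → Y[1] and h₂ : Z₂ → Y[1]. Then there exist objects X₁ and X₂ of 𝒟 together with: (1) distinguished triangles Y → X₁ → Z₁ →h₁ Y[1] and Y → X₂ → Z₂ →h₂ Y[1]; and (2) distinguished triangles X₁ → X → Z₂ → X₁[1] and X₂ → X → Z₁ → X₂[1]. -/
open CategoryTheory CategoryTheory.Limits CategoryTheory.Pretriangulated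

universe v u

/-!
Take a cocone `X₁` of the composite `X ⟶ Z₁ ⊞ Z₂ ⟶ Z₂`. The octahedral axiom, applied to this
composite with the given triangle and the split triangle `Z₁ ⟶ Z₁ ⊞ Z₂ ⟶ Z₂ ⟶ Z₁⟦1⟧`, yields
a distinguished triangle `Y ⟶ X₁ ⟶ Z₁ ⟶ Y⟦1⟧` whose third map is `biprod.inl ≫ h`.
Symmetrically for `X₂`, using the other split triangle.
-/

namespace CategoryTheory.Pretriangulated

variable {C : Type u} [Category.{v} C] [Preadditive C] [HasZeroObject C] [HasShift C ℤ]
  [∀ n : ℤ, (shiftFunctor C n).Additive] [Pretriangulated C]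

lemma binaryBiproductTriangle_inr_fst_distinguished [HasBinaryBiproducts C] (Z₁ Z₂ : C) :
    Triangle.mk (biprod.inr : Z₂ ⟶ Z₁ ⊞ Z₂) biprod.fst 0 ∈ distTriang C := by
  have comm₁ : biprod.inr ≫ (biprod.braiding Z₁ Z₂).hom = 𝟙 Z₂ ≫ biprod.inl := by
    ext <;> simp
  have comm₂ : biprod.fst ≫ 𝟙 Z₁ = (biprod.braiding Z₁ Z₂).hom ≫ biprod.snd := by simp
  have comm₃ : (0 : Z₁ ⟶ Z₂⟦(1 : ℤ)⟧) ≫ (𝟙 Z₂)⟦(1 : ℤ)⟧' = 𝟙 Z₁ ≫ 0 := by simp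
  exact isomorphic_distinguished _ (binaryBiproductTriangle_distinguished Z₂ Z₁) _
    (Triangle.isoMk _ _ (Iso.refl Z₂) (biprod.braiding Z₁ Z₂) (Iso.refl Z₁) comm₁ comm₂ comm₃)

lemma exists_distTriang_cocone_comp [IsTriangulated C] {Y X Z Z' Z'' : C}
    {f : Y ⟶ X} {g : X ⟶ Z} {h : Z ⟶ Y⟦(1 : ℤ)⟧} (hT : Triangle.mk f g h ∈ distTriang C)
    {i : Z' ⟶ Z} {p : Z ⟶ Z''} {δ : Z'' ⟶ Z'⟦(1 : ℤ)⟧} (hS : Triangle.mk i p δ ∈ distTriang C) :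
    ∃ (X' : C) (a : Y ⟶ X') (b : X' ⟶ Z') (u : X' ⟶ X) (w : Z'' ⟶ X'⟦(1 : ℤ)⟧),
      Triangle.mk a b (i ≫ h) ∈ distTriang C ∧ Triangle.mk u (g ≫ p) w ∈ distTriang C := by
  obtain ⟨X', u, w, hU⟩ := distinguished_cocone_triangle₁ (g ≫ p)
  let oct := Triangulated.someOctahedron' rfl hT hS hU
  exact ⟨X', oct.m₁, oct.m₃, u, w, oct.mem, hU⟩

end CategoryTheory.Pretriangulated

/-- Given a distinguished triangle `Y → X → Z₁ ⊞ Z₂ → Y⟦1⟧` in a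
triangulated category with finite biproducts, whose third map has components
`h₁ = biprod.inl ≫ h` and `h₂ = biprod.inr ≫ h`, there exist objects `X₁`, `X₂`
together with distinguished triangles `Y → X₁ → Z₁ →h₁ Y⟦1⟧`, `Y → X₂ → Z₂ →h₂ Y⟦1⟧`,
`X₁ → X → Z₂ → X₁⟦1⟧` and `X₂ → X → Z₁ → X₂⟦1⟧`. -/
theorem stmt_0 {C : Type u} [Category.{v} C] [Preadditive C] [HasZeroObject C]
    [HasShift C ℤ] [∀ n : ℤ, (shiftFunctor C n).Additive] [Pretriangulated C]
    [IsTriangulated C] [HasBinaryBiproducts C]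
    (Y X Z₁ Z₂ : C) (f : Y ⟶ X) (g : X ⟶ Z₁ ⊞ Z₂) (h : Z₁ ⊞ Z₂ ⟶ Y⟦(1 : ℤ)⟧)
    (hT : Triangle.mk f g h ∈ distTriang C) :
    ∃ (X₁ X₂ : C)
      (a₁ : Y ⟶ X₁) (b₁ : X₁ ⟶ Z₁) (a₂ : Y ⟶ X₂) (b₂ : X₂ ⟶ Z₂)
      (u₁ : X₁ ⟶ X) (v₁ : X ⟶ Z₂) (w₁ : Z₂ ⟶ X₁⟦(1 : ℤ)⟧)
      (u₂ : X₂ ⟶ X) (v₂ : X ⟶ Z₁) (w₂ : Z₁ ⟶ X₂⟦(1 : ℤ)⟧),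
      (Triangle.mk a₁ b₁ (biprod.inl ≫ h) ∈ distTriang C) ∧
      (Triangle.mk a₂ b₂ (biprod.inr ≫ h) ∈ distTriang C) ∧
      (Triangle.mk u₁ v₁ w₁ ∈ distTriang C) ∧
      Triangle.mk u₂ v₂ w₂ ∈ distTriang C := by
  obtain ⟨X₁, a₁, b₁, u₁, w₁, h₁, h₁'⟩ :=
    exists_distTriang_cocone_comp hT (binaryBiproductTriangle_distinguished Z₁ Z₂)
  obtain ⟨X₂, a₂, b₂, u₂, w₂, h₂, h₂'⟩ :=
    exists_distTriang_cocone_comp hT (binaryBiproductTriangle_inr_fst_distinguished Z₁ Z₂)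
  exact ⟨X₁, X₂, a₁, b₁, a₂, b₂, u₁, _, w₁, u₂, _, w₂, h₁, h₂, h₁', h₂'⟩
end

section
/- Let Y → X ⊕ Z →g Z → Y[1] be a distinguished triangle in 𝒟 such that the composite of the canonical inclusion Z → X ⊕ Z with g is zero (i.e. the Z-component g_Z of g = (g_X, g_Z) vanishes). Then there exists an object Y′ of 𝒟 and a distinguished triangle Y′ → X →g_X Z → Y′[1] such that Y ≅ Y′ ⊕ Z. -/
open CategoryTheory CategoryTheory.Limits CategoryTheory.Pretriangulated

universe v u

/-! Complete `g_X : X ⟶ Z` to a distinguished triangle `Y' ⟶ X ⟶ Z ⟶ Y'⟦1⟧`. Its direct sum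
with the contractible triangle `Z ⟶ Z ⟶ 0 ⟶ Z⟦1⟧` is distinguished, with second morphism
`(g_X, 0) = g` up to `Z ⊞ 0 ≅ Z`. Completing the identities on the second and third objects
to a morphism into the given triangle, the five lemma makes `Y' ⊞ Z ⟶ Y` an isomorphism. -/

namespace CategoryTheory

variable {C : Type u} [Category.{v} C]

section PiBool

variable [HasZeroMorphisms C]

@[simps]
noncomputable def Limits.piBoolIsoBiprod (F : Bool → C) [HasProduct F]
    [HasBinaryBiproduct (F false) (F true)] :
    ∏ᶜ F ≅ F false ⊞ F true where
  hom := biprod.lift (Pi.π F false) (Pi.π F true)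
  inv := Pi.lift fun b => Bool.rec biprod.fst biprod.snd b
  hom_inv_id := by
    ext (_ | _) <;> simp
  inv_hom_id := by
    ext <;> simp

lemma Limits.Pi.map_comp_piBoolIsoBiprod_hom {F G : Bool → C} [HasProduct F] [HasProduct G]
    [HasBinaryBiproduct (F false) (F true)] [HasBinaryBiproduct (G false) (G true)]
    (φ : ∀ b, F b ⟶ G b) :
    Pi.map φ ≫ (piBoolIsoBiprod G).hom =
      (piBoolIsoBiprod F).hom ≫ biprod.map (φ false) (φ true) := by
  ext <;> simp

end PiBool

namespace Pretriangulated

variable [Preadditive C] [HasZeroObject C] [HasShift C ℤ] [∀ n : ℤ, (shiftFunctor C n).Additive]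
  [Pretriangulated C]

lemma nonempty_iso_biprod_obj₁ {T T₁ T₂ : Triangle C} (hT : T ∈ distTriang C)
    (hT₁ : T₁ ∈ distTriang C) (hT₂ : T₂ ∈ distTriang C)
    (e₂ : T₁.obj₂ ⊞ T₂.obj₂ ≅ T.obj₂) (e₃ : T₁.obj₃ ⊞ T₂.obj₃ ≅ T.obj₃)
    (comm : biprod.map T₁.mor₂ T₂.mor₂ ≫ e₃.hom = e₂.hom ≫ T.mor₂) :
    Nonempty (T.obj₁ ≅ T₁.obj₁ ⊞ T₂.obj₁) := by
  let F : Bool → Triangle C := fun b => Bool.rec T₁ T₂ b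
  have hP : productTriangle F ∈ distTriang C :=
    productTriangle_distinguished F fun b => Bool.rec hT₁ hT₂ b
  let e₂' : (productTriangle F).obj₂ ≅ T.obj₂ := piBoolIsoBiprod (fun b => (F b).obj₂) ≪≫ e₂
  let e₃' : (productTriangle F).obj₃ ≅ T.obj₃ := piBoolIsoBiprod (fun b => (F b).obj₃) ≪≫ e₃
  have comm' : (productTriangle F).mor₂ ≫ e₃'.hom = e₂'.hom ≫ T.mor₂ := by
    change Limits.Pi.map (fun b => (F b).mor₂) ≫ _ ≫ e₃.hom = (_ ≫ e₂.hom) ≫ T.mor₂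
    rw [reassoc_of% Pi.map_comp_piBoolIsoBiprod_hom, Category.assoc, ← comm]
  obtain ⟨a, ha₁, ha₃⟩ := complete_distinguished_triangle_morphism₁ _ _ hP hT _ _ comm'
  have : IsIso a := isIso₁_of_isIso₂₃ ⟨a, e₂'.hom, e₃'.hom, ha₁, comm', ha₃⟩ hP hT
    e₂'.isIso_hom e₃'.isIso_hom
  exact ⟨(asIso a).symm ≪≫ piBoolIsoBiprod fun b => (F b).obj₁⟩

end Pretriangulated

end CategoryTheory

/-- Let `Y → X ⊞ Z →g Z → Y⟦1⟧` be a distinguished triangle in a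
pretriangulated category with finite biproducts such that the `Z`-component of `g`
vanishes, i.e. `biprod.inr ≫ g = 0`.  Then there exists an object `Y'` and a
distinguished triangle `Y' → X →(biprod.inl ≫ g) Z → Y'⟦1⟧` such that `Y ≅ Y' ⊞ Z`. -/
theorem stmt_1 {C : Type u} [Category.{v} C] [Preadditive C] [HasZeroObject C]
    [HasShift C ℤ] [∀ n : ℤ, (shiftFunctor C n).Additive] [Pretriangulated C]
    [HasBinaryBiproducts C]
    (Y X Z : C) (f : Y ⟶ X ⊞ Z) (g : X ⊞ Z ⟶ Z) (h : Z ⟶ Y⟦(1 : ℤ)⟧)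
    (hT : Triangle.mk f g h ∈ distTriang C)
    (hgZ : biprod.inr ≫ g = 0) :
    ∃ (Y' : C) (a : Y' ⟶ X) (w : Z ⟶ Y'⟦(1 : ℤ)⟧),
      (Triangle.mk a (biprod.inl ≫ g) w ∈ distTriang C) ∧ Nonempty (Y ≅ Y' ⊞ Z) := by
  obtain ⟨Y', a, w, hT'⟩ := distinguished_cocone_triangle₁ (biprod.inl ≫ g)
  open ZeroObject in
  have comm : biprod.map (biprod.inl ≫ g) (0 : Z ⟶ 0) ≫ biprod.fst = 𝟙 (X ⊞ Z) ≫ g := by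
    rw [biprod.map_fst, Category.id_comp]
    apply biprod.hom_ext' <;> simp [hgZ]
  exact ⟨Y', a, w, hT', nonempty_iso_biprod_obj₁ hT hT' (contractible_distinguished Z)
    (Iso.refl _) (isoBiprodZero (isZero_zero C)).symm comm⟩
end

section
/- Let X, Y, Z be objects of 𝒟 with Z indecomposable, and suppose there exists a distinguished triangle Y → X ⊕ Z → Z → Y[1]. Then either X ≅ Y, or there exists an object Y′ of 𝒟 and a distinguished triangle Y′ → X → Z → Y′[1] such that Y ≅ Y′ ⊕ Z. -/
/-!
Since `Z` is indecomposable, the endomorphism `u := inr ≫ g` of `Z` is a scalar `c`. If `c ≠ 0`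
then `u` is invertible, and an upper triangular automorphism of `X ⊞ Z` identifies `g` with the projection
onto `Z`; the triangle is then isomorphic to the split triangle `X → X ⊞ Z → Z`, so `Y ≅ X`.
If `c = 0` then `g` factors through the projection onto `X` as `b := inl ≫ g`; completing `b`
to a triangle `Y' → X → Z` and adding the contractible triangle `Z → Z → 0` yields a
distinguished triangle `Y' ⊞ Z → X ⊞ Z → Z`, whence `Y ≅ Y' ⊞ Z`.
-/

open CategoryTheory CategoryTheory.Limits CategoryTheory.Pretriangulated

universe v u

variable {C : Type u} [Category.{v} C] [Preadditive C] [HasZeroObject C]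
  [HasShift C ℤ] [∀ n : ℤ, (shiftFunctor C n).Additive] [Pretriangulated C]
  [HasFiniteBiproducts C]

/-- An object `M` is indecomposable if it is nonzero and in any isomorphism
`M ≅ A ⊞ B` one of `A`, `B` is zero. -/
def Indecomp (M : C) : Prop :=
  ¬ IsZero M ∧ ∀ A B : C, Nonempty (M ≅ A ⊞ B) → IsZero A ∨ IsZero B

namespace CategoryTheory.Pretriangulated

open ZeroObject

@[simps]
noncomputable def piBoolIsoBiprod (G : Bool → C) : ∏ᶜ G ≅ G true ⊞ G false where
  hom := biprod.lift (Pi.π G true) (Pi.π G false)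
  inv := Pi.lift fun b => match b with
    | true => biprod.fst
    | false => biprod.snd
  hom_inv_id := by
    apply Pi.hom_ext
    rintro (_ | _) <;> simp
  inv_hom_id := by
    ext <;> simp

lemma piBoolIsoBiprod_hom_naturality {G H : Bool → C} (φ : ∀ b, G b ⟶ H b) :
    Limits.Pi.map φ ≫ (piBoolIsoBiprod H).hom =
      (piBoolIsoBiprod G).hom ≫ biprod.map (φ true) (φ false) := by
  ext <;> simp

lemma exists_biprod_distinguished (T₁ T₂ : Triangle C) (h₁ : T₁ ∈ distTriang C)
    (h₂ : T₂ ∈ distTriang C) :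
    ∃ m₃ : T₁.obj₃ ⊞ T₂.obj₃ ⟶ (T₁.obj₁ ⊞ T₂.obj₁)⟦(1 : ℤ)⟧,
      Triangle.mk (biprod.map T₁.mor₁ T₂.mor₁) (biprod.map T₁.mor₂ T₂.mor₂) m₃
        ∈ distTriang C := by
  let T : Bool → Triangle C := fun b => cond b T₁ T₂
  have hT : ∀ b, T b ∈ distTriang C := by rintro (_ | _) <;> assumption
  let e₁ := piBoolIsoBiprod fun b => (T b).obj₁
  let e₂ := piBoolIsoBiprod fun b => (T b).obj₂
  let e₃ := piBoolIsoBiprod fun b => (T b).obj₃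
  refine ⟨e₃.inv ≫ (productTriangle T).mor₃ ≫ e₁.hom⟦(1 : ℤ)⟧', ?_⟩
  refine isomorphic_distinguished _ (productTriangle_distinguished T hT) _ ?_
  refine (Triangle.isoMk _ _ e₁ e₂ e₃ ?_ ?_ ?_).symm
  · exact piBoolIsoBiprod_hom_naturality fun b => (T b).mor₁
  · exact piBoolIsoBiprod_hom_naturality fun b => (T b).mor₂
  · exact (e₃.hom_inv_id_assoc _).symm

noncomputable def isoObj₁OfIso₂₃ (T₁ T₂ : Triangle C) (h₁ : T₁ ∈ distTriang C)
    (h₂ : T₂ ∈ distTriang C) (e₂ : T₁.obj₂ ≅ T₂.obj₂) (e₃ : T₁.obj₃ ≅ T₂.obj₃)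
    (comm : T₁.mor₂ ≫ e₃.hom = e₂.hom ≫ T₂.mor₂) : T₁.obj₁ ≅ T₂.obj₁ :=
  (shiftFunctor C (1 : ℤ)).preimageIso <| Triangle.π₃.mapIso <|
    isoTriangleOfIso₁₂ _ _ (rot_of_distTriang _ h₁) (rot_of_distTriang _ h₂) e₂ e₃ comm

variable {X Y Z : C} {f : Y ⟶ X ⊞ Z} {g : X ⊞ Z ⟶ Z} {h : Z ⟶ Y⟦(1 : ℤ)⟧}

omit [HasFiniteBiproducts C] in
lemma nonempty_iso_of_isIso_inr_comp (hT : Triangle.mk f g h ∈ distTriang C)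
    [IsIso (biprod.inr ≫ g)] : Nonempty (Y ≅ X) := by
  let u := biprod.inr ≫ g
  let φ : X ⊞ Z ≅ X ⊞ Z :=
    Biprod.unipotentUpper ((biprod.inl ≫ g) ≫ inv u) ≪≫ biprod.mapIso (Iso.refl X) (asIso u)
  have hφ : φ.hom ≫ biprod.snd = g := by ext <;> simp [φ, u, Biprod.ofComponents]
  -- `simp` cannot close the compatibility square directly: its objects are `Triangle.mk`
  -- projections, only definitionally equal to `X ⊞ Z` and `Z`.
  exact ⟨isoObj₁OfIso₂₃ _ _ hT (binaryBiproductTriangle_distinguished X Z) φ (Iso.refl Z)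
    ((Category.comp_id g).trans hφ.symm)⟩

lemma exists_distTriang_of_inr_comp_eq_zero (hT : Triangle.mk f g h ∈ distTriang C)
    (hg : biprod.inr ≫ g = 0) :
    ∃ (Y' : C) (a : Y' ⟶ X) (b : X ⟶ Z) (w : Z ⟶ Y'⟦(1 : ℤ)⟧),
      Triangle.mk a b w ∈ distTriang C ∧ Nonempty (Y ≅ Y' ⊞ Z) := by
  obtain ⟨Y', a, w, hT'⟩ := distinguished_cocone_triangle₁ (biprod.inl ≫ g)
  obtain ⟨m₃, hS⟩ := exists_biprod_distinguished _ _ hT' (contractible_distinguished Z)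
  have hg' : g ≫ biprod.inl = biprod.map (biprod.inl ≫ g) (0 : Z ⟶ 0) := by
    ext <;> simp [hg]
  exact ⟨Y', a, biprod.inl ≫ g, w, hT', ⟨isoObj₁OfIso₂₃ _ _ hT hS (Iso.refl _)
    (isoBiprodZero (isZero_zero C)) (hg'.trans (Category.id_comp _).symm)⟩⟩

end CategoryTheory.Pretriangulated

theorem stmt_2_general {k : Type*} [Field k] [Linear k C]
    (hEnd : ∀ M : C, Indecomp M → ∀ e : M ⟶ M, ∃ c : k, e = c • 𝟙 M)
    (X Y Z : C) (hZ : Indecomp Z)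
    (f : Y ⟶ X ⊞ Z) (g : X ⊞ Z ⟶ Z) (h : Z ⟶ Y⟦(1 : ℤ)⟧)
    (hT : Triangle.mk f g h ∈ distTriang C) :
    Nonempty (X ≅ Y) ∨
      ∃ (Y' : C) (a : Y' ⟶ X) (b : X ⟶ Z) (w : Z ⟶ Y'⟦(1 : ℤ)⟧),
        (Triangle.mk a b w ∈ distTriang C) ∧ Nonempty (Y ≅ Y' ⊞ Z) := by
  obtain ⟨c, hc⟩ := hEnd Z hZ (biprod.inr ≫ g)
  by_cases hc0 : c = 0
  · exact Or.inr (exists_distTriang_of_inr_comp_eq_zero hT (by rw [hc, hc0, zero_smul]))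
  · have : IsIso (biprod.inr ≫ g) := by
      rw [hc]
      exact ⟨c⁻¹ • 𝟙 Z, by simp [smul_smul, hc0], by simp [smul_smul, hc0]⟩
    exact Or.inl ((nonempty_iso_of_isIso_inr_comp hT).map Iso.symm)

/-- In a `k`-linear pretriangulated category with finite biproducts in
which every object is a finite direct sum of indecomposables and endomorphisms of
indecomposables are scalars: if `Z` is indecomposable and there is a distinguished
triangle `Y → X ⊞ Z → Z → Y⟦1⟧`, then either `X ≅ Y`, or there exists `Y'` and a
distinguished triangle `Y' → X → Z → Y'⟦1⟧` with `Y ≅ Y' ⊞ Z`. -/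
theorem stmt_2 {k : Type*} [Field k] [Linear k C]
    (hKS : ∀ M : C, ∃ (n : ℕ) (f : Fin n → C),
      (∀ i, Indecomp (f i)) ∧ Nonempty (M ≅ ⨁ f))
    (hEnd : ∀ M : C, Indecomp M → ∀ e : M ⟶ M, ∃ c : k, e = c • 𝟙 M)
    (X Y Z : C) (hZ : Indecomp Z)
    (f : Y ⟶ X ⊞ Z) (g : X ⊞ Z ⟶ Z) (h : Z ⟶ Y⟦(1 : ℤ)⟧)
    (hT : Triangle.mk f g h ∈ distTriang C) :
    Nonempty (X ≅ Y) ∨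
      ∃ (Y' : C) (a : Y' ⟶ X) (b : X ⟶ Z) (w : Z ⟶ Y'⟦(1 : ℤ)⟧),
        (Triangle.mk a b w ∈ distTriang C) ∧ Nonempty (Y ≅ Y' ⊞ Z) :=
  stmt_2_general hEnd X Y Z hZ f g h hT
end

section
/- Let X, Y, Y₁, Y₂ be objects of 𝒟 with Y ≅ Y₁ ⊕ Y₂, and suppose there is a distinguished triangle Y₁ → X → Y₂ → Y₁[1]. Then there exists a distinguished triangle Y → X ⊕ Y₂ → Y₂ → Y[1]; in particular X ≤_Δ Y, i.e. every ext-degeneration is a degeneration. -/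
/-!
The biproduct of two triangles is their product in the category of triangles; since products of
distinguished triangles are distinguished, so is the biproduct of two distinguished triangles.
Adding the contractible triangle `Y₂ → Y₂ → 0 → Y₂⟦1⟧` to `Y₁ → X → Y₂ → Y₁⟦1⟧` gives a
distinguished triangle `Y₁ ⊞ Y₂ → X ⊞ Y₂ → Y₂ ⊞ 0 → (Y₁ ⊞ Y₂)⟦1⟧`, whose vertices are
isomorphic to `Y`, `X ⊞ Y₂` and `Y₂`.
-/

open CategoryTheory CategoryTheory.Limits CategoryTheory.Pretriangulated

universe v u

variable {C : Type u} [Category.{v} C] [Preadditive C] [HasZeroObject C]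
  [HasShift C ℤ] [∀ n : ℤ, (shiftFunctor C n).Additive] [Pretriangulated C]
  [HasBinaryBiproducts C]

/-- `X ≤_Δ Y`: `X` degenerates to `Y` if there is an object `Z` and a distinguished
triangle `Y → X ⊞ Z → Z → Y⟦1⟧`. -/
def degen (X Y : C) : Prop :=
  ∃ (Z : C) (f : Y ⟶ X ⊞ Z) (g : X ⊞ Z ⟶ Z) (h : Z ⟶ Y⟦(1 : ℤ)⟧),
    Triangle.mk f g h ∈ distTriang C

section

variable {C : Type u} [Category.{v} C] [Preadditive C] [HasShift C ℤ]

lemma exists_distinguished_of_isos [HasZeroObject C] [∀ n : ℤ, (shiftFunctor C n).Additive]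
    [Pretriangulated C] {T : Triangle C} (hT : T ∈ distTriang C) {A B D : C}
    (e₁ : A ≅ T.obj₁) (e₂ : B ≅ T.obj₂) (e₃ : D ≅ T.obj₃) :
    ∃ (f : A ⟶ B) (g : B ⟶ D) (h : D ⟶ A⟦(1 : ℤ)⟧), Triangle.mk f g h ∈ distTriang C :=
  ⟨_, _, _, isomorphic_distinguished _ hT _ <| Triangle.isoMk
    (Triangle.mk (e₁.hom ≫ T.mor₁ ≫ e₂.inv) (e₂.hom ≫ T.mor₂ ≫ e₃.inv)
      (e₃.hom ≫ T.mor₃ ≫ e₁.inv⟦(1 : ℤ)⟧')) T e₁ e₂ e₃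
    (by dsimp only [Triangle.mk]; simp) (by dsimp only [Triangle.mk]; simp)
    (by dsimp only [Triangle.mk]; simp [← Functor.map_comp])⟩

variable [HasBinaryBiproducts C]

-- Reducible, so that its objects are visibly biproducts to the `biprod` simp lemmas.
noncomputable abbrev biprodTriangle (T₁ T₂ : Triangle C) : Triangle C where
  obj₁ := T₁.obj₁ ⊞ T₂.obj₁
  obj₂ := T₁.obj₂ ⊞ T₂.obj₂
  obj₃ := T₁.obj₃ ⊞ T₂.obj₃
  mor₁ := biprod.map T₁.mor₁ T₂.mor₁
  mor₂ := biprod.map T₁.mor₂ T₂.mor₂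
  mor₃ := biprod.desc (T₁.mor₃ ≫ biprod.inl⟦(1 : ℤ)⟧') (T₂.mor₃ ≫ biprod.inr⟦(1 : ℤ)⟧')

variable [∀ n : ℤ, (shiftFunctor C n).Additive]

@[simps]
noncomputable def biprodTriangle.fst (T₁ T₂ : Triangle C) : biprodTriangle T₁ T₂ ⟶ T₁ where
  hom₁ := biprod.fst
  hom₂ := biprod.fst
  hom₃ := biprod.fst
  comm₃ := by ext <;> simp [← Functor.map_comp]

@[simps]
noncomputable def biprodTriangle.snd (T₁ T₂ : Triangle C) : biprodTriangle T₁ T₂ ⟶ T₂ where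
  hom₁ := biprod.snd
  hom₂ := biprod.snd
  hom₃ := biprod.snd
  comm₃ := by ext <;> simp [← Functor.map_comp]

@[simps]
noncomputable def biprodTriangle.lift {T T₁ T₂ : Triangle C} (φ₁ : T ⟶ T₁) (φ₂ : T ⟶ T₂) :
    T ⟶ biprodTriangle T₁ T₂ where
  hom₁ := biprod.lift φ₁.hom₁ φ₂.hom₁
  hom₂ := biprod.lift φ₁.hom₂ φ₂.hom₂
  hom₃ := biprod.lift φ₁.hom₃ φ₂.hom₃
  comm₃ := by
    simp [biprod.lift_eq, φ₁.comm₃_assoc, φ₂.comm₃_assoc]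

noncomputable def biprodTriangle.isLimitBinaryFan (T₁ T₂ : Triangle C) :
    IsLimit (BinaryFan.mk (biprodTriangle.fst T₁ T₂) (biprodTriangle.snd T₁ T₂)) :=
  BinaryFan.IsLimit.mk _ biprodTriangle.lift
    (fun _ _ => by ext <;> simp) (fun _ _ => by ext <;> simp)
    (fun _ _ m h₁ h₂ => by
      subst h₁ h₂
      ext <;> apply biprod.hom_ext <;> simp)

lemma biprodTriangle_distinguished [HasZeroObject C] [Pretriangulated C] (T₁ T₂ : Triangle C)
    (h₁ : T₁ ∈ distTriang C) (h₂ : T₂ ∈ distTriang C) :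
    biprodTriangle T₁ T₂ ∈ distTriang C :=
  isomorphic_distinguished _ (productTriangle_distinguished (pairFunction T₁ T₂)
    (by rintro (_ | _) <;> assumption)) _
    (IsLimit.conePointUniqueUpToIso (biprodTriangle.isLimitBinaryFan T₁ T₂)
      (productTriangle.isLimitFan (pairFunction T₁ T₂)))

end

/-- If `Y ≅ Y₁ ⊞ Y₂` and there is a distinguished triangle
`Y₁ → X → Y₂ → Y₁⟦1⟧`, then there is a distinguished triangle
`Y → X ⊞ Y₂ → Y₂ → Y⟦1⟧`; in particular `X ≤_Δ Y`: every ext-degeneration is a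
degeneration. -/
theorem stmt_3 (X Y Y₁ Y₂ : C) (e : Y ≅ Y₁ ⊞ Y₂)
    (u : Y₁ ⟶ X) (v : X ⟶ Y₂) (w : Y₂ ⟶ Y₁⟦(1 : ℤ)⟧)
    (hT : Triangle.mk u v w ∈ distTriang C) :
    (∃ (f : Y ⟶ X ⊞ Y₂) (g : X ⊞ Y₂ ⟶ Y₂) (h : Y₂ ⟶ Y⟦(1 : ℤ)⟧),
      Triangle.mk f g h ∈ distTriang C) ∧ degen X Y := by
  obtain ⟨f, g, h, hd⟩ := exists_distinguished_of_isos
    (biprodTriangle_distinguished _ _ hT (contractible_distinguished Y₂))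
    e (Iso.refl _) (isoBiprodZero (isZero_zero C))
  exact ⟨⟨f, g, h, hd⟩, Y₂, f, g, h, hd⟩
end

section
/- For all integers i, p, a, b with 1 ≤ i ≤ n, 1 ≤ b ≤ a, i − b ≥ 0 and i + a ≤ n + 1, the following identity holds in G: Y_{i−b, p+b} · Y_{i+a, p+a} = Y_{i,p} · Y_{i+a−b, p+a+b} · ∏_{r=0}^{a−1} ∏_{l=0}^{b−1} A_{i+r−l, p+r+l+1}^{−1}. (This is the explicit product of inverse A-variables expressing, in type A_n, the Nakajima-order relation coming from a non-split triangle of shape (C1): V(i,p) → V(i−b,p+b) ⊕ V(i+a,p+a) → V(i+a−b,p+a+b) → V(i,p)[1].) -/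
/-- The free abelian group (written multiplicatively) on the generators `Y_{i,p}`
indexed by pairs `(i,p)` with `i ∈ {1,…,n}` and `p ∈ ℤ`. -/
def FreeYGroup (n : ℕ) : Type :=
  Multiplicative (FreeAbelianGroup ({j : ℤ // 1 ≤ j ∧ j ≤ (n : ℤ)} × ℤ))

instance (n : ℕ) : CommGroup (FreeYGroup n) :=
  inferInstanceAs (CommGroup (Multiplicative (FreeAbelianGroup
    ({j : ℤ // 1 ≤ j ∧ j ≤ (n : ℤ)} × ℤ))))

/-- The generator `Y_{i,p}`, with the convention that `Y_{i,p} = 1` for indices `i`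
outside `{1,…,n}` (in particular `Y_{0,p} = 1` and `Y_{n+1,p} = 1`). -/
noncomputable def Ygen (n : ℕ) (i p : ℤ) : FreeYGroup n :=
  if h : 1 ≤ i ∧ i ≤ (n : ℤ) then
    Multiplicative.ofAdd (FreeAbelianGroup.of (⟨i, h⟩, p))
  else 1

/-- The monomial `A_{i,q} = Y_{i,q−1} · Y_{i,q+1} · Y_{i−1,q}⁻¹ · Y_{i+1,q}⁻¹` of
Nakajima's order, specialized to a quiver of type `A_n`. -/
noncomputable def Amon (n : ℕ) (i q : ℤ) : FreeYGroup n :=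
  Ygen n i (q - 1) * Ygen n i (q + 1) * (Ygen n (i - 1) q)⁻¹ * (Ygen n (i + 1) q)⁻¹

/-- For `1 ≤ i ≤ n`, `1 ≤ b ≤ a`, `i − b ≥ 0` and `i + a ≤ n + 1`
(condition (C1)), the identity
`Y_{i−b,p+b} · Y_{i+a,p+a} = Y_{i,p} · Y_{i+a−b,p+a+b} · ∏_{r=0}^{a−1} ∏_{l=0}^{b−1}
A_{i+r−l,p+r+l+1}⁻¹` holds in the free abelian group on the `Y_{i,p}`. -/
theorem stmt_14 (n : ℕ) (hn : 1 ≤ n) (i p a b : ℤ)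
    (hi1 : 1 ≤ i) (hin : i ≤ (n : ℤ)) (hb : 1 ≤ b) (hba : b ≤ a)
    (hib : 0 ≤ i - b) (hia : i + a ≤ (n : ℤ) + 1) :
    Ygen n (i - b) (p + b) * Ygen n (i + a) (p + a) =
      Ygen n i p * Ygen n (i + a - b) (p + a + b) *
        ∏ r ∈ Finset.range a.toNat, ∏ l ∈ Finset.range b.toNat,
          (Amon n (i + (r : ℤ) - (l : ℤ)) (p + (r : ℤ) + (l : ℤ) + 1))⁻¹ := by

  set f : ℕ → ℕ → FreeYGroup n := fun r l => Ygen n (i + (r:ℤ) - (l:ℤ)) (p + (r:ℤ) + (l:ℤ)) with hf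
  have key : ∀ r l : ℕ, (Amon n (i + (r:ℤ) - (l:ℤ)) (p + (r:ℤ) + (l:ℤ) + 1))⁻¹
      = (f r (l+1) / f r l) * (f (r+1) l / f (r+1) (l+1)) := by
    intro r l
    have e1 : f r l = Ygen n (i + (r:ℤ) - (l:ℤ)) ((p + (r:ℤ) + (l:ℤ) + 1) - 1) := by
      simp only [hf]; ring_nf
    have e2 : f (r+1) (l+1) = Ygen n (i + (r:ℤ) - (l:ℤ)) ((p + (r:ℤ) + (l:ℤ) + 1) + 1) := by
      simp only [hf]; push_cast; ring_nf
    have e3 : f r (l+1) = Ygen n ((i + (r:ℤ) - (l:ℤ)) - 1) (p + (r:ℤ) + (l:ℤ) + 1) := by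
      simp only [hf]; push_cast; ring_nf
    have e4 : f (r+1) l = Ygen n ((i + (r:ℤ) - (l:ℤ)) + 1) (p + (r:ℤ) + (l:ℤ) + 1) := by
      simp only [hf]; push_cast; ring_nf
    have aux1 : ∀ A B C D : FreeYGroup n, (A*B*C⁻¹*D⁻¹)⁻¹ = (C/A)*(D/B) := by
      intro A B C D; simp [div_eq_mul_inv, mul_inv, zpow_neg, mul_comm, mul_left_comm, mul_assoc]
    rw [Amon, ← e1, ← e2, ← e3, ← e4, aux1]
  have inner : ∀ r : ℕ, (∏ l ∈ Finset.range b.toNat,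
      (Amon n (i + (r:ℤ) - (l:ℤ)) (p + (r:ℤ) + (l:ℤ) + 1))⁻¹)
      = (f r b.toNat / f r 0) * (f (r+1) 0 / f (r+1) b.toNat) := by
    intro r
    rw [Finset.prod_congr rfl (fun l _ => key r l), Finset.prod_mul_distrib,
      Finset.prod_range_div (fun l => f r l), Finset.prod_range_div' (fun l => f (r+1) l)]
  rw [Finset.prod_congr rfl (fun r _ => inner r)]
  have outer : (∏ r ∈ Finset.range a.toNat,
      (f r b.toNat / f r 0) * (f (r+1) 0 / f (r+1) b.toNat))
      = (f 0 b.toNat / f 0 0) / (f a.toNat b.toNat / f a.toNat 0) := by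
    have := Finset.prod_range_div' (fun r => f r b.toNat / f r 0) a.toNat
    rw [← this]
    have aux2 : ∀ A B C D : FreeYGroup n, (A/B)*(C/D) = (A/B)/(D/C) := by
      intro A B C D; simp [div_eq_mul_inv, mul_inv, zpow_neg, mul_comm, mul_left_comm, mul_assoc]
    exact Finset.prod_congr rfl (fun r _ => aux2 _ _ _ _)
  rw [outer]
  have hbn : ((b.toNat : ℤ)) = b := Int.toNat_of_nonneg (by linarith)
  have han : ((a.toNat : ℤ)) = a := Int.toNat_of_nonneg (by linarith)
  have g1 : f 0 b.toNat = Ygen n (i - b) (p + b) := by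
    simp only [hf, hbn, Nat.cast_zero]; ring_nf
  have g2 : f 0 0 = Ygen n i p := by
    simp only [hf, Nat.cast_zero]; ring_nf
  have g3 : f a.toNat 0 = Ygen n (i + a) (p + a) := by
    simp only [hf, han, Nat.cast_zero]; ring_nf
  have g4 : f a.toNat b.toNat = Ygen n (i + a - b) (p + a + b) := by
    simp only [hf, han, hbn]
  rw [g1, g2, g3, g4]
  have aux3 : ∀ x1 x2 x3 x4 : FreeYGroup n, x1*x2 = x3*x4*((x1/x3)/(x4/x2)) := by
    intro x1 x2 x3 x4; simp [div_eq_mul_inv, mul_inv, mul_comm, mul_left_comm, mul_assoc]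
  exact aux3 _ _ _ _
end

section
/- For all integers i, p, a, b with 1 ≤ i ≤ n, 1 ≤ b ≤ a, i + b ≤ n + 1 and i − a ≥ 0, the following identity holds in G: Y_{i+b, p+b} · Y_{i−a, p+a} = Y_{i,p} · Y_{i+b−a, p+a+b} · ∏_{r=0}^{a−1} ∏_{l=0}^{b−1} A_{i−r+l, p+r+l+1}^{−1}. (This is the explicit product of inverse A-variables expressing, in type A_n, the Nakajima-order relation coming from a non-split triangle of shape (C2): V(i,p) → V(i+b,p+b) ⊕ V(i−a,p+a) → V(i+b−a,p+a+b) → V(i,p)[1].) -/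
lemma col_lemma (n : ℕ) (i p : ℤ) (a : ℕ) :
    Ygen n (i + 1) (p + 1) * Ygen n (i - a) (p + a) =
      Ygen n i p * Ygen n (i + 1 - a) (p + a + 1) *
        ∏ r ∈ Finset.range a, (Amon n (i - (r : ℤ)) (p + (r : ℤ) + 1))⁻¹ := by
  induction a with
  | zero =>
      push_cast
      ring_nf
      simp [mul_comm]
  | succ a ih =>
      have hP : (∏ r ∈ Finset.range a, (Amon n (i - (r : ℤ)) (p + (r : ℤ) + 1))⁻¹)
          = (Ygen n i p * Ygen n (i + 1 - a) (p + a + 1))⁻¹ *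
            (Ygen n (i + 1) (p + 1) * Ygen n (i - a) (p + a)) := by
        rw [eq_inv_mul_iff_mul_eq]; exact ih.symm
      rw [Finset.prod_range_succ, hP, Amon]
      push_cast
      ring_nf
      simp [mul_inv_rev, mul_assoc, mul_comm, mul_left_comm]

lemma main_lemma (n : ℕ) (i p : ℤ) (a b : ℕ) :
    Ygen n (i + b) (p + b) * Ygen n (i - a) (p + a) =
      Ygen n i p * Ygen n (i + b - a) (p + a + b) *
        ∏ r ∈ Finset.range a, ∏ l ∈ Finset.range b,
          (Amon n (i - (r : ℤ) + (l : ℤ)) (p + (r : ℤ) + (l : ℤ) + 1))⁻¹ := by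
  induction b with
  | zero =>
      push_cast
      ring_nf
      simp [mul_comm]
  | succ b ih =>
      simp only [Finset.prod_range_succ, Finset.prod_mul_distrib]
      have hQ : (∏ r ∈ Finset.range a, (Amon n (i - (r : ℤ) + (b : ℤ)) (p + (r : ℤ) + (b : ℤ) + 1))⁻¹)
          = ∏ r ∈ Finset.range a, (Amon n (i + (b : ℤ) - (r : ℤ)) (p + (b : ℤ) + (r : ℤ) + 1))⁻¹ :=
        Finset.prod_congr rfl (fun r _ => by ring_nf)
      rw [hQ]
      have hcol := col_lemma n (i + b) (p + b) a
      have hQ2 : (∏ r ∈ Finset.range a, (Amon n (i + (b : ℤ) - (r : ℤ)) (p + (b : ℤ) + (r : ℤ) + 1))⁻¹)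
          = (Ygen n (i + b) (p + b) * Ygen n (i + b + 1 - a) (p + b + a + 1))⁻¹ *
            (Ygen n (i + b + 1) (p + b + 1) * Ygen n (i + b - a) (p + b + a)) := by
        rw [eq_inv_mul_iff_mul_eq]; exact hcol.symm
      have hP : (∏ r ∈ Finset.range a, ∏ l ∈ Finset.range b,
            (Amon n (i - (r : ℤ) + (l : ℤ)) (p + (r : ℤ) + (l : ℤ) + 1))⁻¹)
          = (Ygen n i p * Ygen n (i + b - a) (p + a + b))⁻¹ *
            (Ygen n (i + b) (p + b) * Ygen n (i - a) (p + a)) := by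
        rw [eq_inv_mul_iff_mul_eq]; exact ih.symm
      rw [hP, hQ2]
      push_cast
      ring_nf
      simp [mul_inv_rev, mul_assoc, mul_comm, mul_left_comm]

/-- For `1 ≤ i ≤ n`, `1 ≤ b ≤ a`, `i + b ≤ n + 1` and `i − a ≥ 0`
(condition (C2)), the identity
`Y_{i+b,p+b} · Y_{i−a,p+a} = Y_{i,p} · Y_{i+b−a,p+a+b} · ∏_{r=0}^{a−1} ∏_{l=0}^{b−1}
A_{i−r+l,p+r+l+1}⁻¹` holds in the free abelian group on the `Y_{i,p}`. -/
theorem stmt_15 (n : ℕ) (hn : 1 ≤ n) (i p a b : ℤ)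
    (hi1 : 1 ≤ i) (hin : i ≤ (n : ℤ)) (hb : 1 ≤ b) (hba : b ≤ a)
    (hib : i + b ≤ (n : ℤ) + 1) (hia : 0 ≤ i - a) :
    Ygen n (i + b) (p + b) * Ygen n (i - a) (p + a) =
      Ygen n i p * Ygen n (i + b - a) (p + a + b) *
        ∏ r ∈ Finset.range a.toNat, ∏ l ∈ Finset.range b.toNat,
          (Amon n (i - (r : ℤ) + (l : ℤ)) (p + (r : ℤ) + (l : ℤ) + 1))⁻¹ := by
  lift a to ℕ using (by linarith)
  lift b to ℕ using (by linarith)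
  rw [Int.toNat_natCast, Int.toNat_natCast]
  exact main_lemma n i p a b
end
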